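/- arXiv:2403.19630 — 2 statements merged into one kernel-verified Lean document; each statement's English description precedes it below -/
import Mathlib

section
/- Let m ≥ 1 and let n, ℓ be integers with Δ = 4mn − ℓ² > 0. Then the series Σ_{γ=2}^∞ Kl(Δ/(4m), −1; γ, ψ)_{ℓ0}·γ^{−1/2}·I_12(2π√(Δ/m)/γ) converges absolutely and the modulus of its sum is strictly less than (2/21)·I_12(2π√(Δ/m)). -/
open Real

noncomputable def besselI (ν x : ℝ) : ℝ :=
  ∑' k : ℕ, (x / 2) ^ (2 * (k : ℝ) + ν) / ((k.factorial : ℝ) * Real.Gamma ((k : ℝ) + ν + 1))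

/-- The multiplier system `ψ(γ, δ)_{ℓ̃ℓ}` of the index-`m` theta functions, where
`α` is the inverse of `δ` modulo `γ` (taken in `[0, γ)`). -/
noncomputable def psiMult (m γ : ℕ) (δ : ℤ) (ℓt ℓ : ℤ) : ℂ :=
  (((2 * m * γ : ℕ) : ℂ) * Complex.I) ^ (-(1 / 2 : ℂ)) *
    ∑ T ∈ Finset.range γ,
      Complex.exp (2 * (Real.pi : ℂ) * Complex.I *
        ((((((δ : ZMod γ)⁻¹).val : ℕ) : ℂ) * ((ℓt : ℂ) - 2 * m * T) ^ 2) / (4 * m * γ)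
          - ((ℓ : ℂ) * ((ℓt : ℂ) - 2 * m * T)) / (2 * m * γ)
          + ((δ : ℂ) * (ℓ : ℂ) ^ 2) / (4 * m * γ)))

/-- The generalized Kloosterman sum `Kl(A, B; γ, ψ)_{ℓℓ̃}`: the sum runs over
`δ = -j` with `0 ≤ j < γ` and `gcd(j, γ) = 1`, and `α(δ, γ)` is the inverse of `δ` mod `γ`. -/
noncomputable def Kl (m : ℕ) (A B : ℚ) (γ : ℕ) (ℓ ℓt : ℤ) : ℂ :=
  ∑ j ∈ (Finset.range γ).filter fun j => Nat.gcd j γ = 1,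
    Complex.exp (2 * (Real.pi : ℂ) * Complex.I *
      (((((-(j : ℤ) : ZMod γ)⁻¹).val : ℕ) : ℂ) * (B : ℂ) / γ + ((-(j : ℤ) : ℤ) : ℂ) * (A : ℂ) / γ)) *
    psiMult m γ (-(j : ℤ)) ℓt ℓ

/-! The estimate is the trivial one. Every summand of `Kl` and of `ψ` is a unimodular exponential,
so `‖Kl(γ)‖ ≤ γ² (2mγ)^(-1/2) ≤ γ^(3/2)`, while the power series of `I_ν` gives
`I_ν(x/γ) ≤ γ^(-ν) I_ν(x)` for `γ ≥ 1`. Hence the `γ`-th term is at most `γ^(-11) I₁₂(x)`, and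
`∑_{γ ≥ 2} γ^(-11) ≤ 2^(-9) ∑_{γ ≥ 2} 1/(γ(γ-1)) = 2^(-9) < 2/21`. -/

open Complex in
lemma norm_exp_two_pi_I_mul {z : ℂ} (hz : z.im = 0) : ‖exp (2 * π * I * z)‖ = 1 := by
  simp [Complex.norm_exp, hz]

section Bessel

variable (ν : ℕ) {x : ℝ}

lemma besselI_natCast_eq :
    besselI ν x = ∑' k : ℕ, (x / 2) ^ (2 * k + ν) / ((k.factorial : ℝ) * (k + ν).factorial) := by
  refine tsum_congr fun k => ?_
  rw [show 2 * (k : ℝ) + ν = ((2 * k + ν : ℕ) : ℝ) by push_cast; ring, Real.rpow_natCast,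
    show (k : ℝ) + ν + 1 = ((k + ν : ℕ) : ℝ) + 1 by push_cast; ring, Real.Gamma_nat_eq_factorial]

lemma summable_besselI_terms (hx : 0 ≤ x) :
    Summable fun k : ℕ => (x / 2) ^ (2 * k + ν) / ((k.factorial : ℝ) * (k + ν).factorial) := by
  refine .of_nonneg_of_le (fun k => by positivity) (fun k => ?_)
    ((Real.summable_pow_div_factorial ((x / 2) ^ 2)).mul_left ((x / 2) ^ ν))
  rw [pow_add, pow_mul, mul_comm (((x / 2) ^ 2) ^ k), mul_div_assoc]
  gcongr
  exact le_mul_of_one_le_right (by positivity) (mod_cast (k + ν).factorial_pos)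

lemma besselI_nonneg (hx : 0 ≤ x) : 0 ≤ besselI ν x := by
  rw [besselI_natCast_eq]
  exact tsum_nonneg fun k => by positivity

lemma besselI_pos (hx : 0 < x) : 0 < besselI ν x := by
  rw [besselI_natCast_eq]
  exact (summable_besselI_terms ν hx.le).tsum_pos (fun k => by positivity) 0 (by positivity)

lemma besselI_div_le {c : ℝ} (hx : 0 ≤ x) (hc : 1 ≤ c) :
    besselI ν (x / c) ≤ besselI ν x / c ^ ν := by
  rw [besselI_natCast_eq, besselI_natCast_eq, ← tsum_div_const]
  refine Summable.tsum_le_tsum (fun k => ?_) (summable_besselI_terms ν (by positivity))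
    ((summable_besselI_terms ν hx).div_const _)
  rw [div_right_comm, div_pow, div_right_comm _ (c ^ _)]
  gcongr
  omega

end Bessel

lemma norm_psiMult_le (m γ : ℕ) (δ ℓt ℓ : ℤ) :
    ‖psiMult m γ δ ℓt ℓ‖ ≤ γ * ((2 * m * γ : ℕ) : ℝ) ^ (-(1 / 2) : ℝ) := by
  have hprefactor : ‖(((2 * m * γ : ℕ) : ℂ) * Complex.I) ^ (-(1 / 2 : ℂ))‖
      = ((2 * m * γ : ℕ) : ℝ) ^ (-(1 / 2) : ℝ) := by
    rw [Complex.norm_cpow_of_imp (fun _ h => by norm_num at h)]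
    simp
  rw [psiMult, norm_mul, hprefactor, mul_comm]
  gcongr
  refine (norm_sum_le _ _).trans ?_
  refine (Finset.sum_le_sum fun T _ => (norm_exp_two_pi_I_mul ?_).le).trans (by simp)
  simp [Complex.div_im, pow_two]

lemma norm_Kl_le (m : ℕ) (A B : ℚ) (γ : ℕ) (ℓ ℓt : ℤ) :
    ‖Kl m A B γ ℓ ℓt‖ ≤ γ ^ 2 * ((2 * m * γ : ℕ) : ℝ) ^ (-(1 / 2) : ℝ) := by
  have hterm : ∀ j ∈ (Finset.range γ).filter fun j => Nat.gcd j γ = 1,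
      ‖Complex.exp (2 * (Real.pi : ℂ) * Complex.I *
        (((((-(j : ℤ) : ZMod γ)⁻¹).val : ℕ) : ℂ) * (B : ℂ) / γ + ((-(j : ℤ) : ℤ) : ℂ) * (A : ℂ) / γ)) *
        psiMult m γ (-(j : ℤ)) ℓt ℓ‖ ≤ γ * ((2 * m * γ : ℕ) : ℝ) ^ (-(1 / 2) : ℝ) := by
    intro j _
    rw [norm_mul, norm_exp_two_pi_I_mul (by simp [Complex.div_im]), one_mul]
    exact norm_psiMult_le ..
  refine (norm_sum_le _ _).trans ((Finset.sum_le_sum hterm).trans ?_)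
  rw [Finset.sum_const, nsmul_eq_mul, pow_two, mul_assoc (γ : ℝ)]
  gcongr
  exact_mod_cast (Finset.card_filter_le _ _).trans (Finset.card_range γ).le

lemma norm_Kl_mul_besselI_le {m ν c : ℕ} (A B : ℚ) (ℓ ℓt : ℤ) {x : ℝ} (hm : 1 ≤ m) (hc : 1 ≤ c)
    (hx : 0 ≤ x) :
    ‖Kl m A B c ℓ ℓt * (((c : ℝ) ^ (-(1 / 2 : ℝ)) : ℝ) : ℂ) * (besselI ν (x / c) : ℂ)‖ ≤
      c * (besselI ν x / c ^ ν) := by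
  have hc0 : (0 : ℝ) < c := by exact_mod_cast hc
  have hroot : ((2 * m * c : ℕ) : ℝ) ^ (-(1 / 2) : ℝ) ≤ (c : ℝ) ^ (-(1 / 2) : ℝ) :=
    Real.rpow_le_rpow_of_nonpos hc0 (mod_cast Nat.le_mul_of_pos_left c (by omega)) (by norm_num)
  have hhalf : (c : ℝ) ^ (-(1 / 2) : ℝ) * (c : ℝ) ^ (-(1 / 2) : ℝ) = (c : ℝ)⁻¹ := by
    rw [← Real.rpow_add hc0]
    norm_num [Real.rpow_neg_one]
  have hKl : ‖Kl m A B c ℓ ℓt‖ ≤ c ^ 2 * (c : ℝ) ^ (-(1 / 2) : ℝ) :=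
    (norm_Kl_le ..).trans (by gcongr)
  have hbessel : besselI ν (x / c) ≤ besselI ν x / c ^ ν := besselI_div_le ν hx (by exact_mod_cast hc)
  have hbessel0 : 0 ≤ besselI ν (x / c) := besselI_nonneg ν (by positivity)
  rw [norm_mul, norm_mul, Complex.norm_real, Complex.norm_real, Real.norm_of_nonneg (by positivity),
    Real.norm_of_nonneg hbessel0]
  calc _ ≤ (c ^ 2 * (c : ℝ) ^ (-(1 / 2) : ℝ)) * (c : ℝ) ^ (-(1 / 2) : ℝ) * (besselI ν x / c ^ ν) := by
        gcongr
    _ = c * (besselI ν x / c ^ ν) := by rw [mul_assoc (_ ^ 2), hhalf, pow_two, mul_self_mul_inv]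

lemma hasSum_one_div_add_one_mul_add_two :
    HasSum (fun n : ℕ => 1 / (((n : ℝ) + 1) * ((n : ℝ) + 2))) 1 := by
  rw [hasSum_iff_tendsto_nat_of_nonneg (fun n => by positivity)]
  have hpartial (N : ℕ) :
      ∑ n ∈ Finset.range N, 1 / (((n : ℝ) + 1) * ((n : ℝ) + 2)) = 1 - 1 / ((N : ℝ) + 1) := by
    induction N with
    | zero => simp
    | succ N ih =>
      rw [Finset.sum_range_succ, ih]
      push_cast
      field_simp
      ring
  simp only [hpartial]
  simpa using tendsto_one_div_add_atTop_nhds_zero_nat.const_sub (1 : ℝ)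

lemma one_div_add_two_pow_le (n k : ℕ) :
    1 / ((n : ℝ) + 2) ^ (k + 2) ≤ 1 / 2 ^ k * (1 / (((n : ℝ) + 1) * ((n : ℝ) + 2))) := by
  rw [div_mul_div_comm, one_mul]
  gcongr
  calc (2 : ℝ) ^ k * (((n : ℝ) + 1) * ((n : ℝ) + 2)) ≤ ((n : ℝ) + 2) ^ k * ((n : ℝ) + 2) ^ 2 := by
        rw [pow_two]
        gcongr <;> linarith
    _ = ((n : ℝ) + 2) ^ (k + 2) := by ring

lemma summable_norm_and_norm_tsum_le {E : Type*} [NormedAddCommGroup E] {f : ℕ → E} {C : ℝ}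
    (hf : ∀ n, ‖f n‖ ≤ C * (1 / (((n : ℝ) + 1) * ((n : ℝ) + 2)))) :
    Summable (fun n => ‖f n‖) ∧ ‖∑' n, f n‖ ≤ C := by
  have hmajorant := hasSum_one_div_add_one_mul_add_two.mul_left C
  rw [mul_one] at hmajorant
  have hsummable : Summable (fun n => ‖f n‖) :=
    .of_nonneg_of_le (fun n => norm_nonneg _) hf hmajorant.summable
  exact ⟨hsummable, (norm_tsum_le_tsum_norm hsummable).trans
    (hmajorant.tsum_eq ▸ hsummable.tsum_le_tsum hf hmajorant.summable)⟩

theorem stmt5 (m : ℕ) (hm : 1 ≤ m) (n ℓ : ℤ)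
    (hΔ : 0 < 4 * (m : ℤ) * n - ℓ ^ 2) :
    Summable (fun γ : ℕ =>
      ‖Kl m (((4 * (m : ℤ) * n - ℓ ^ 2 : ℤ) : ℚ) / (4 * m)) (-1) (γ + 2) ℓ 0 *
        (((((γ : ℕ) + 2 : ℕ) : ℝ) ^ (-(1 / 2 : ℝ)) : ℝ) : ℂ) *
        (besselI 12
          (2 * Real.pi * Real.sqrt (((4 * (m : ℤ) * n - ℓ ^ 2 : ℤ) : ℝ) / m) /
            (((γ : ℕ) + 2 : ℕ) : ℝ)) : ℝ)‖) ∧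
    ‖∑' γ : ℕ,
        Kl m (((4 * (m : ℤ) * n - ℓ ^ 2 : ℤ) : ℚ) / (4 * m)) (-1) (γ + 2) ℓ 0 *
        (((((γ : ℕ) + 2 : ℕ) : ℝ) ^ (-(1 / 2 : ℝ)) : ℝ) : ℂ) *
        (besselI 12
          (2 * Real.pi * Real.sqrt (((4 * (m : ℤ) * n - ℓ ^ 2 : ℤ) : ℝ) / m) /
            (((γ : ℕ) + 2 : ℕ) : ℝ)) : ℝ)‖ <
      (2 / 21) * besselI 12 (2 * Real.pi * Real.sqrt (((4 * (m : ℤ) * n - ℓ ^ 2 : ℤ) : ℝ) / m)) := by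
  set A : ℚ := ((4 * (m : ℤ) * n - ℓ ^ 2 : ℤ) : ℚ) / (4 * m)
  set x : ℝ := 2 * Real.pi * Real.sqrt (((4 * (m : ℤ) * n - ℓ ^ 2 : ℤ) : ℝ) / m)
  have hx : 0 < x := by
    have hΔ' : (0 : ℝ) < ((4 * (m : ℤ) * n - ℓ ^ 2 : ℤ) : ℝ) := by exact_mod_cast hΔ
    have hm' : (0 : ℝ) < m := by exact_mod_cast hm
    positivity
  have hI : 0 < besselI 12 x := by exact_mod_cast besselI_pos 12 hx
  have hterm (γ : ℕ) :
      ‖Kl m A (-1) (γ + 2) ℓ 0 * ((((γ + 2 : ℕ) : ℝ) ^ (-(1 / 2 : ℝ)) : ℝ) : ℂ) *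
        (besselI 12 (x / ((γ + 2 : ℕ) : ℝ)) : ℝ)‖ ≤
        besselI 12 x / 2 ^ 9 * (1 / (((γ : ℝ) + 1) * ((γ : ℝ) + 2))) := by
    have h := norm_Kl_mul_besselI_le (ν := 12) A (-1) ℓ 0 hm (c := γ + 2) (by omega) hx.le
    rw [Nat.cast_ofNat] at h
    refine h.trans ?_
    calc _ = besselI 12 x * (1 / ((γ : ℝ) + 2) ^ (9 + 2)) := by push_cast; field_simp
      _ ≤ _ := by
        rw [div_eq_mul_one_div _ ((2 : ℝ) ^ 9), mul_assoc]
        exact mul_le_mul_of_nonneg_left (one_div_add_two_pow_le γ 9) hI.le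
  obtain ⟨hsummable, hnorm⟩ := summable_norm_and_norm_tsum_le hterm
  exact ⟨hsummable, hnorm.trans_lt (by linarith)⟩
end

section
/- Let m and ℓ̃ be integers with m ≥ 1 and 0 < ℓ̃ ≤ m. Then the polar coefficient c_m^F(0, ℓ̃) defined by the SL(2,ℤ) continued-fraction sum equals ℓ̃·d(0)·Σ_{r=1}^{⌊(m+1)/ℓ̃⌋} d(m − rℓ̃). -/
/-- `d n`: the coefficient of `q^(n+1)` in `∏ (1 - q^j)^{-24}`, i.e. the number of
24-tuples of integer partitions whose sizes sum to `n+1` (and `0` for `n < -1`). -/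
def dcoef (n : ℤ) : ℤ :=
  if 0 ≤ n + 1 then
    ∑ v ∈ Finset.Nat.antidiagonalTuple 24 (n + 1).toNat,
      ∏ i, (Fintype.card (Nat.Partition (v i)) : ℤ)
  else 0

lemma dcoef_eq_zero {n : ℤ} (h : n < -1) : dcoef n = 0 := by
  rw [dcoef, if_neg]; omega

lemma neg_one_le_of_dcoef_ne_zero {n : ℤ} (h : dcoef n ≠ 0) : -1 ≤ n := by
  by_contra hc; exact h (dcoef_eq_zero (by omega))

/-- integer form of the polar-sum term -/
def fterm (m ℓt p q r s : ℤ) : ℤ :=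
  if p * s - q * r = 1 ∧ 0 < r ∧ 0 < s ∧ 2 * m * q ≤ ℓt * s ∧
      r * (ℓt * s - 2 * m * q) < 2 * m then
    (-(2 * p * q * m) + (p * s + q * r) * ℓt) * dcoef (p ^ 2 * m - p * r * ℓt) *
      dcoef (q ^ 2 * m - q * s * ℓt)
  else 0

lemma master (m ℓt p q r s : ℤ) (hm : 1 ≤ m) (hℓ0 : 0 < ℓt) (hℓm : ℓt ≤ m)
    (h1 : p * s - q * r = 1) (hr : 0 < r) (hs : 0 < s)
    (h2 : 2 * m * q ≤ ℓt * s) (h3 : r * (ℓt * s - 2 * m * q) < 2 * m) :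
    (p = 1 ∧ q = 0 ∧ s = 1) ∨ (m = 1 ∧ ℓt = 1 ∧ p = 1 ∧ q = 1 ∧ r = 1 ∧ s = 2) ∨
    dcoef (p ^ 2 * m - p * r * ℓt) = 0 ∨ dcoef (q ^ 2 * m - q * s * ℓt) = 0 := by
  have hq0 : 0 ≤ q := by nlinarith
  rcases eq_or_lt_of_le hq0 with hq | hq
  · left
    subst hq
    have hps : p * s = 1 := by linarith [h1]
    rcases Int.eq_one_or_neg_one_of_mul_eq_one' hps with ⟨hp, hs1⟩ | ⟨hp, hs1⟩
    · exact ⟨hp, rfl, hs1⟩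
    · omega
  · have hq1 : 1 ≤ q := hq
    have harg2 : q ^ 2 * m - q * s * ℓt ≤ -(m * q ^ 2) := by nlinarith
    by_cases hm2 : 2 ≤ m
    · right; right; right
      exact dcoef_eq_zero (by nlinarith)
    · have hm1 : m = 1 := by omega
      have hℓ1 : ℓt = 1 := by omega
      subst hm1; subst hℓ1
      by_cases hq2 : 2 ≤ q
      · right; right; right
        exact dcoef_eq_zero (by nlinarith)
      · have hq1' : q = 1 := by omega
        subst hq1'
        have hs2 : 2 ≤ s := by nlinarith
        by_cases hs3 : 3 ≤ s
        · right; right; right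
          apply dcoef_eq_zero; nlinarith
        · have hs2' : s = 2 := by omega
          subst hs2'
          have hrp : r = 2 * p - 1 := by omega
          have hp1 : 1 ≤ p := by omega
          by_cases hp2 : 2 ≤ p
          · right; right; left
            apply dcoef_eq_zero
            subst hrp; nlinarith
          · have : p = 1 := by omega
            right; left; exact ⟨rfl, rfl, this, rfl, by omega, rfl⟩

lemma fterm_ne_zero (m ℓt p q r s : ℤ) (hm : 1 ≤ m) (hℓ0 : 0 < ℓt) (hℓm : ℓt ≤ m)
    (h : fterm m ℓt p q r s ≠ 0) :
    (p = 1 ∧ q = 0 ∧ s = 1 ∧ 0 < r ∧ r * ℓt ≤ m + 1) ∨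
    (m = 1 ∧ ℓt = 1 ∧ p = 1 ∧ q = 1 ∧ r = 1 ∧ s = 2) := by
  rw [fterm] at h
  by_cases hC : p * s - q * r = 1 ∧ 0 < r ∧ 0 < s ∧ 2 * m * q ≤ ℓt * s ∧
      r * (ℓt * s - 2 * m * q) < 2 * m
  swap
  · rw [if_neg hC] at h; exact absurd rfl h
  rw [if_pos hC] at h
  obtain ⟨h1, hr, hs, h2, h3⟩ := hC
  rcases master m ℓt p q r s hm hℓ0 hℓm h1 hr hs h2 h3 with
    ⟨hp, hq, hs1⟩ | hcase | hd | hd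
  · left
    refine ⟨hp, hq, hs1, hr, ?_⟩
    subst hp; subst hq; subst hs1
    have hd1 : dcoef (1 ^ 2 * m - 1 * r * ℓt) ≠ 0 := fun h0 => h (by rw [h0]; ring)
    have := neg_one_le_of_dcoef_ne_zero hd1
    nlinarith [this]
  · right; exact hcase
  · exact absurd (by rw [hd]; ring) h
  · exact absurd (by rw [hd]; ring) h

lemma cond_iff (m ℓt q r s : ℤ) (hm : 1 ≤ m) (hr : 0 < r) (hs : 0 < s) :
    (0 ≤ (ℓt : ℚ) / (2 * m) - (q : ℚ) / s ∧
      (ℓt : ℚ) / (2 * m) - (q : ℚ) / s < 1 / ((r : ℚ) * s)) ↔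
    (2 * m * q ≤ ℓt * s ∧ r * (ℓt * s - 2 * m * q) < 2 * m) := by
  have hm' : (0:ℚ) < 2 * (m:ℚ) := by
    have : (1:ℚ) ≤ (m:ℚ) := by exact_mod_cast hm
    linarith
  have hs' : (0:ℚ) < (s:ℚ) := by exact_mod_cast hs
  have hr' : (0:ℚ) < (r:ℚ) := by exact_mod_cast hr
  have e1 : (0 ≤ (ℓt : ℚ) / (2 * m) - (q : ℚ) / s) ↔ (2 * m * q ≤ ℓt * s) := by
    rw [sub_nonneg, div_le_div_iff₀ hs' hm']
    constructor
    · intro h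
      have : (2 * m * q : ℚ) ≤ (ℓt * s : ℚ) := by push_cast; linarith
      exact_mod_cast this
    · intro h
      have : (2 * (m:ℚ) * q ≤ (ℓt:ℚ) * s) := by exact_mod_cast h
      linarith
  have e2 : ((ℓt : ℚ) / (2 * m) - (q : ℚ) / s < 1 / ((r : ℚ) * s)) ↔
      (r * (ℓt * s - 2 * m * q) < 2 * m) := by
    have key : (ℓt : ℚ) / (2 * m) - (q : ℚ) / s
        = ((ℓt * s - 2 * m * q : ℤ) : ℚ) / (2 * m * s) := by
      push_cast
      field_simp
    rw [key, div_lt_div_iff₀ (by positivity) (by positivity)]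
    constructor
    · intro h
      have h2 : ((r * (ℓt * s - 2 * m * q) : ℤ) : ℚ) * s < (2 * m : ℚ) * s := by
        push_cast at h ⊢; nlinarith
      have h3 : ((r * (ℓt * s - 2 * m * q) : ℤ) : ℚ) < (2 * m : ℚ) :=
        lt_of_mul_lt_mul_right (by linarith) (le_of_lt hs')
      exact_mod_cast h3
    · intro h
      have h3 : ((r * (ℓt * s - 2 * m * q) : ℤ) : ℚ) < ((2 * m : ℤ) : ℚ) := by exact_mod_cast h
      push_cast at h3 ⊢
      nlinarith
  rw [e1, e2]


lemma main_sum (m ℓt : ℤ) (hm : 1 ≤ m) (hℓ0 : 0 < ℓt) (hℓm : ℓt ≤ m) :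
    (∑ᶠ (p : ℤ) (q : ℤ) (r : ℤ) (s : ℤ), fterm m ℓt p q r s) =
      ℓt * dcoef 0 * ∑ r ∈ Finset.Icc 1 ((m + 1) / ℓt), dcoef (m - r * ℓt) := by
  have hcases := fterm_ne_zero m ℓt
  -- peel p
  have h1 : (∑ᶠ (p : ℤ) (q : ℤ) (r : ℤ) (s : ℤ), fterm m ℓt p q r s) =
      ∑ᶠ (q : ℤ) (r : ℤ) (s : ℤ), fterm m ℓt 1 q r s := by
    refine finsum_eq_single _ 1 fun p hp => ?_
    have hz : ∀ q r s : ℤ, fterm m ℓt p q r s = 0 := by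
      intro q r s
      by_contra h
      rcases hcases p q r s hm hℓ0 hℓm h with ⟨hp1, _⟩ | ⟨_, _, hp1, _⟩ <;> exact hp hp1
    simp [hz]
  -- peel q
  have h2 : (∑ᶠ (q : ℤ) (r : ℤ) (s : ℤ), fterm m ℓt 1 q r s) =
      (∑ᶠ (r : ℤ) (s : ℤ), fterm m ℓt 1 0 r s) +
      (∑ᶠ (r : ℤ) (s : ℤ), fterm m ℓt 1 1 r s) := by
    have hsub : Function.support (fun q => ∑ᶠ (r : ℤ) (s : ℤ), fterm m ℓt 1 q r s) ⊆
        (({0, 1} : Finset ℤ) : Set ℤ) := by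
      intro q hq
      simp only [Function.mem_support] at hq
      by_contra hmem
      apply hq
      have hz : ∀ r s : ℤ, fterm m ℓt 1 q r s = 0 := by
        intro r s
        by_contra h
        rcases hcases 1 q r s hm hℓ0 hℓm h with ⟨_, hq1, _⟩ | ⟨_, _, _, hq1, _⟩ <;>
          · subst hq1; simp at hmem
      simp [hz]
    rw [finsum_eq_finset_sum_of_support_subset _ hsub]
    rw [Finset.sum_pair (by norm_num : (0:ℤ) ≠ 1)]
  -- q = 0 branch: s must be 1
  have h3 : (∑ᶠ (r : ℤ) (s : ℤ), fterm m ℓt 1 0 r s) =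
      ∑ᶠ (r : ℤ), fterm m ℓt 1 0 r 1 := by
    refine finsum_congr fun r => finsum_eq_single _ 1 fun s hs => ?_
    by_contra h
    rcases hcases 1 0 r s hm hℓ0 hℓm h with ⟨_, _, hs1, _⟩ | ⟨_, _, _, hq1, _⟩
    · exact hs hs1
    · exact absurd hq1 (by norm_num)
  -- q = 0 branch: finite support in r
  have h4 : (∑ᶠ (r : ℤ), fterm m ℓt 1 0 r 1) =
      ∑ r ∈ Finset.Icc 1 ((m + 1) / ℓt), fterm m ℓt 1 0 r 1 := by
    apply finsum_eq_finset_sum_of_support_subset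
    intro r hr
    simp only [Function.mem_support] at hr
    rcases hcases 1 0 r 1 hm hℓ0 hℓm hr with ⟨_, _, _, hr0, hrℓ⟩ | ⟨_, _, _, hq1, _⟩
    · simp only [Finset.coe_Icc, Set.mem_Icc]
      exact ⟨hr0, (Int.le_ediv_iff_mul_le hℓ0).mpr hrℓ⟩
    · exact absurd hq1 (by norm_num)
  -- q = 1 branch
  have h5 : (∑ᶠ (r : ℤ) (s : ℤ), fterm m ℓt 1 1 r s) = fterm m ℓt 1 1 1 2 := by
    have ha : ∀ r : ℤ, (∑ᶠ (s : ℤ), fterm m ℓt 1 1 r s) = fterm m ℓt 1 1 r (r + 1) := by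
      intro r
      refine finsum_eq_single _ (r + 1) fun s hs => ?_
      rw [fterm, if_neg]
      rintro ⟨hps, -⟩
      exact hs (by omega)
    calc (∑ᶠ (r : ℤ) (s : ℤ), fterm m ℓt 1 1 r s)
        = ∑ᶠ (r : ℤ), fterm m ℓt 1 1 r (r + 1) := finsum_congr ha
      _ = fterm m ℓt 1 1 1 (1 + 1) := by
          refine finsum_eq_single _ 1 fun r hr => ?_
          by_contra h
          rcases hcases 1 1 r (r + 1) hm hℓ0 hℓm h with ⟨_, hq1, _⟩ | ⟨_, _, _, _, hr1, _⟩
          · exact absurd hq1 (by norm_num)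
          · exact hr hr1
      _ = fterm m ℓt 1 1 1 2 := by norm_num
  rw [h1, h2, h3, h4, h5, Finset.mul_sum]
  by_cases hm2 : 2 ≤ m
  · -- special term is 0
    have hz : fterm m ℓt 1 1 1 2 = 0 := by
      by_contra h
      rcases hcases 1 1 1 2 hm hℓ0 hℓm h with ⟨_, hq1, _⟩ | ⟨hm1, _⟩
      · exact absurd hq1 (by norm_num)
      · omega
    rw [hz, add_zero]
    refine Finset.sum_congr rfl fun r hrmem => ?_
    simp only [Finset.mem_Icc] at hrmem
    obtain ⟨hr1, hr2⟩ := hrmem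
    have hrℓ : r * ℓt ≤ m + 1 := (Int.le_ediv_iff_mul_le hℓ0).mp hr2
    rw [fterm, if_pos ⟨by ring, hr1, one_pos, by nlinarith, by nlinarith⟩]
    norm_num
    ring
  · -- m = 1, ℓt = 1
    have hm1 : m = 1 := by omega
    have hℓ1 : ℓt = 1 := by omega
    subst hm1; subst hℓ1
    norm_num
    have hIcc : Finset.Icc (1:ℤ) 2 = {1, 2} := rfl
    rw [hIcc, Finset.sum_pair (by norm_num : (1:ℤ) ≠ 2),
      Finset.sum_pair (by norm_num : (1:ℤ) ≠ 2)]
    have e1 : fterm 1 1 1 0 1 1 = dcoef 0 * dcoef 0 := by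
      rw [fterm, if_pos (by norm_num)]; norm_num
    have e2 : fterm 1 1 1 0 2 1 = 0 := by
      rw [fterm, if_neg]; rintro ⟨-, -, -, -, h⟩; norm_num at h
    have e3 : fterm 1 1 1 1 1 2 = dcoef 0 * dcoef (-1) := by
      rw [fterm, if_pos (by norm_num)]; norm_num
    rw [e1, e2, e3]
    norm_num


/-- The polar coefficient `c_m^F(ñ, ℓ̃)`, given by the `SL(2,ℤ)` continued-fraction sum
over quadruples `(p, q, r, s)` with `ps - qr = 1`, `r, s > 0` and
`0 ≤ ℓ̃/(2m) - q/s < 1/(rs)`; only finitely many terms are nonzero. -/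
noncomputable def polarCoef (m nt ℓt : ℤ) : ℤ :=
  ∑ᶠ (p : ℤ) (q : ℤ) (r : ℤ) (s : ℤ),
    if p * s - q * r = 1 ∧ 0 < r ∧ 0 < s ∧
        0 ≤ (ℓt : ℚ) / (2 * m) - (q : ℚ) / s ∧
        (ℓt : ℚ) / (2 * m) - (q : ℚ) / s < 1 / ((r : ℚ) * s) then
      (-2 * r * s * nt - 2 * p * q * m + (p * s + q * r) * ℓt) *
        dcoef (r ^ 2 * nt + p ^ 2 * m - p * r * ℓt) *
        dcoef (s ^ 2 * nt + q ^ 2 * m - q * s * ℓt)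
    else 0

theorem stmt12 (m ℓt : ℤ) (hm : 1 ≤ m) (hℓ0 : 0 < ℓt) (hℓm : ℓt ≤ m) :
    polarCoef m 0 ℓt = ℓt * dcoef 0 * ∑ r ∈ Finset.Icc 1 ((m + 1) / ℓt), dcoef (m - r * ℓt) := by
  have step0 : polarCoef m 0 ℓt = ∑ᶠ (p : ℤ) (q : ℤ) (r : ℤ) (s : ℤ), fterm m ℓt p q r s := by
    rw [polarCoef]
    refine finsum_congr fun p => finsum_congr fun q => finsum_congr fun r =>
      finsum_congr fun s => ?_
    rw [fterm]
    refine if_congr ?_ (by norm_num) rfl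
    constructor
    · rintro ⟨h1, h2, h3, h4, h5⟩
      obtain ⟨h4', h5'⟩ := (cond_iff m ℓt q r s hm h2 h3).mp ⟨h4, h5⟩
      exact ⟨h1, h2, h3, h4', h5'⟩
    · rintro ⟨h1, h2, h3, h4, h5⟩
      obtain ⟨h4', h5'⟩ := (cond_iff m ℓt q r s hm h2 h3).mpr ⟨h4, h5⟩
      exact ⟨h1, h2, h3, h4', h5'⟩
  rw [step0]
  exact main_sum m ℓt hm hℓ0 hℓm
end
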